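/- For k = 1, …, 6 let u_k = (cos((k−1)π/3), sin((k−1)π/3)) ∈ ℝ², and define H = { (1/(3j−2))·u_k : k ∈ {1,3,5}, j ∈ ℕ, j ≥ 1 } ∪ { (1/(3j−1))·u_k : k ∈ {2,4,6}, j ∈ ℕ, j ≥ 1 }. Then H is countably infinite, bounded, not collinear, the origin 0 is the unique accumulation point of H, and no affine line meets H in exactly two points. -/

import Mathlib

open Filter

/-- The unit vector at angle `(k-1)π/3` from the positive x-axis. -/
noncomputable def u (k : ℕ) : EuclideanSpace ℝ (Fin 2) :=
  WithLp.toLp 2 ![Real.cos ((k - 1 : ℝ) * Real.pi / 3), Real.sin ((k - 1 : ℝ) * Real.pi / 3)]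

/-- The point set of the construction. -/
noncomputable def Hset : Set (EuclideanSpace ℝ (Fin 2)) :=
  {x | ∃ k ∈ ({1, 3, 5} : Set ℕ), ∃ j : ℕ, 1 ≤ j ∧ x = (1 / (3 * (j : ℝ) - 2)) • u k} ∪
  {x | ∃ k ∈ ({2, 4, 6} : Set ℕ), ∃ j : ℕ, 1 ≤ j ∧ x = (1 / (3 * (j : ℝ) - 1)) • u k}

/-- An affine line: an affine subspace whose direction is one-dimensional. -/
def IsLine (L : AffineSubspace ℝ (EuclideanSpace ℝ (Fin 2))) : Prop :=
  Module.finrank ℝ L.direction = 1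

local notation "E" => EuclideanSpace ℝ (Fin 2)

lemma u_norm (k : ℕ) : ‖u k‖ = 1 := by
  rw [EuclideanSpace.norm_eq]
  simp [u, Fin.sum_univ_two]

lemma u_ne_zero (k : ℕ) : u k ≠ 0 := by
  intro h
  have := u_norm k
  rw [h, norm_zero] at this
  norm_num at this

private lemma cs2 : Real.cos (2*(Real.pi/3)) = -(1/2) ∧ Real.sin (2*(Real.pi/3)) = Real.sqrt 3 / 2 := by
  rw [show 2*(Real.pi/3) = Real.pi - Real.pi/3 by ring, Real.cos_pi_sub, Real.sin_pi_sub,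
    Real.cos_pi_div_three, Real.sin_pi_div_three]
  norm_num

lemma usum (k : ℕ) : u k + u (k + 2) = u (k + 1) := by
  ext i
  fin_cases i
  · show (u k) 0 + (u (k+2)) 0 = (u (k+1)) 0
    simp only [u, PiLp.toLp_apply, Matrix.cons_val_zero]
    push_cast
    rw [show ((k:ℝ) + 2 - 1) * Real.pi / 3 = ((k:ℝ) - 1) * Real.pi/3 + 2*(Real.pi/3) by ring,
      show ((k:ℝ) + 1 - 1) * Real.pi / 3 = ((k:ℝ) - 1) * Real.pi/3 + (Real.pi/3) by ring,
      Real.cos_add, Real.cos_add, cs2.1, cs2.2, Real.cos_pi_div_three, Real.sin_pi_div_three]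
    ring
  · show (u k) 1 + (u (k+2)) 1 = (u (k+1)) 1
    simp only [u, PiLp.toLp_apply, Matrix.cons_val_one, Matrix.head_cons]
    push_cast
    rw [show ((k:ℝ) + 2 - 1) * Real.pi / 3 = ((k:ℝ) - 1) * Real.pi/3 + 2*(Real.pi/3) by ring,
      show ((k:ℝ) + 1 - 1) * Real.pi / 3 = ((k:ℝ) - 1) * Real.pi/3 + (Real.pi/3) by ring,
      Real.sin_add, Real.sin_add, cs2.1, cs2.2, Real.cos_pi_div_three, Real.sin_pi_div_three]
    ring

lemma uneg (k : ℕ) : u (k + 3) = - u k := by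
  ext i
  fin_cases i
  · show (u (k+3)) 0 = (-(u k)) 0
    simp only [u, PiLp.toLp_apply, PiLp.neg_apply, Matrix.cons_val_zero]
    push_cast
    rw [show ((k:ℝ) + 3 - 1) * Real.pi / 3 = ((k:ℝ) - 1) * Real.pi/3 + Real.pi by ring]
    exact Real.cos_add_pi _
  · show (u (k+3)) 1 = (-(u k)) 1
    simp only [u, PiLp.toLp_apply, PiLp.neg_apply, Matrix.cons_val_one, Matrix.head_cons]
    push_cast
    rw [show ((k:ℝ) + 3 - 1) * Real.pi / 3 = ((k:ℝ) - 1) * Real.pi/3 + Real.pi by ring]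
    exact Real.sin_add_pi _

lemma u1v : u 1 = WithLp.toLp 2 ![1, 0] := by
  ext i
  fin_cases i
  · show (u 1) 0 = 1
    simp [u]
  · show (u 1) 1 = 0
    simp [u]

lemma u2v : u 2 = WithLp.toLp 2 ![1/2, Real.sqrt 3 / 2] := by
  ext i
  fin_cases i
  · show (u 2) 0 = 1/2
    simp only [u, PiLp.toLp_apply, Matrix.cons_val_zero]
    push_cast
    rw [show ((2:ℝ) - 1) * Real.pi / 3 = Real.pi/3 by ring, Real.cos_pi_div_three]
  · show (u 2) 1 = Real.sqrt 3 / 2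
    simp only [u, PiLp.toLp_apply, Matrix.cons_val_one, Matrix.head_cons]
    push_cast
    rw [show ((2:ℝ) - 1) * Real.pi / 3 = Real.pi/3 by ring, Real.sin_pi_div_three]

lemma u3v : u 3 = WithLp.toLp 2 ![-(1/2), Real.sqrt 3 / 2] := by
  ext i
  fin_cases i
  · show (u 3) 0 = -(1/2)
    simp only [u, PiLp.toLp_apply, Matrix.cons_val_zero]
    push_cast
    rw [show ((3:ℝ) - 1) * Real.pi / 3 = 2*(Real.pi/3) by ring, cs2.1]
  · show (u 3) 1 = Real.sqrt 3 / 2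
    simp only [u, PiLp.toLp_apply, Matrix.cons_val_one, Matrix.head_cons]
    push_cast
    rw [show ((3:ℝ) - 1) * Real.pi / 3 = 2*(Real.pi/3) by ring, cs2.2]

lemma u4v : u 4 = WithLp.toLp 2 ![-1, 0] := by
  have h : u 4 = - u 1 := by rw [show (4:ℕ) = 1 + 3 from rfl, uneg]
  rw [h, u1v]
  ext i
  fin_cases i
  · show (-(WithLp.toLp 2 ![1, 0] : E)) 0 = -1
    simp [PiLp.neg_apply, PiLp.toLp_apply]
  · show (-(WithLp.toLp 2 ![1, 0] : E)) 1 = 0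
    simp [PiLp.neg_apply, PiLp.toLp_apply]

lemma u5v : u 5 = WithLp.toLp 2 ![-(1/2), -(Real.sqrt 3 / 2)] := by
  have h : u 5 = - u 2 := by rw [show (5:ℕ) = 2 + 3 from rfl, uneg]
  rw [h, u2v]
  ext i
  fin_cases i
  · show (-(WithLp.toLp 2 ![1/2, Real.sqrt 3/2] : E)) 0 = -(1/2)
    simp [PiLp.neg_apply, PiLp.toLp_apply]
  · show (-(WithLp.toLp 2 ![1/2, Real.sqrt 3/2] : E)) 1 = -(Real.sqrt 3 / 2)
    simp [PiLp.neg_apply, PiLp.toLp_apply]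

lemma u6v : u 6 = WithLp.toLp 2 ![1/2, -(Real.sqrt 3 / 2)] := by
  have h : u 6 = - u 3 := by rw [show (6:ℕ) = 3 + 3 from rfl, uneg]
  rw [h, u3v]
  ext i
  fin_cases i
  · show (-(WithLp.toLp 2 ![-(1/2), Real.sqrt 3/2] : E)) 0 = 1/2
    simp [PiLp.neg_apply, PiLp.toLp_apply]
  · show (-(WithLp.toLp 2 ![-(1/2), Real.sqrt 3/2] : E)) 1 = -(Real.sqrt 3 / 2)
    simp [PiLp.neg_apply, PiLp.toLp_apply]

lemma uper (k : ℕ) : u (k + 6) = u k := by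
  ext i
  fin_cases i
  · show (u (k+6)) 0 = (u k) 0
    simp only [u, PiLp.toLp_apply, Matrix.cons_val_zero]
    push_cast
    rw [show ((k:ℝ) + 6 - 1) * Real.pi / 3 = ((k:ℝ) - 1) * Real.pi/3 + 2*Real.pi by ring]
    exact Real.cos_add_two_pi _
  · show (u (k+6)) 1 = (u k) 1
    simp only [u, PiLp.toLp_apply, Matrix.cons_val_one, Matrix.head_cons]
    push_cast
    rw [show ((k:ℝ) + 6 - 1) * Real.pi / 3 = ((k:ℝ) - 1) * Real.pi/3 + 2*Real.pi by ring]
    exact Real.sin_add_two_pi _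

lemma id1 : u 3 = u 2 - u 1 := by
  have h := usum 1
  rw [show (1+2 : ℕ) = 3 from rfl, show (1+1 : ℕ) = 2 from rfl] at h
  rw [← h]; abel

lemma id2 : u 4 = u 3 - u 2 := by
  have h := usum 2
  rw [show (2+2 : ℕ) = 4 from rfl, show (2+1 : ℕ) = 3 from rfl] at h
  rw [← h]; abel

lemma id3 : u 5 = u 4 - u 3 := by
  have h := usum 3
  rw [show (3+2 : ℕ) = 5 from rfl, show (3+1 : ℕ) = 4 from rfl] at h
  rw [← h]; abel

lemma id4 : u 6 = u 5 - u 4 := by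
  have h := usum 4
  rw [show (4+2 : ℕ) = 6 from rfl, show (4+1 : ℕ) = 5 from rfl] at h
  rw [← h]; abel

lemma id5 : u 1 = u 6 - u 5 := by
  have h := usum 5
  rw [show (5+2 : ℕ) = 7 from rfl, show (5+1 : ℕ) = 6 from rfl] at h
  rw [show (7:ℕ) = 1 + 6 from rfl, uper 1] at h
  rw [← h]; abel

lemma id6 : u 2 = u 1 - u 6 := by
  have h := usum 6
  rw [show (6+2 : ℕ) = 8 from rfl, show (6+1 : ℕ) = 7 from rfl] at h
  rw [show (8:ℕ) = 2 + 6 from rfl, uper 2] at h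
  rw [show (7:ℕ) = 1 + 6 from rfl, uper 1] at h
  rw [← h]; abel

lemma rid1 : u 1 = u 2 - u 3 := by
  rw [id1]; abel

lemma rid2 : u 2 = u 3 - u 4 := by
  rw [id2]; abel

lemma rid3 : u 3 = u 4 - u 5 := by
  rw [id3]; abel

lemma rid4 : u 4 = u 5 - u 6 := by
  rw [id4]; abel

lemma rid5 : u 5 = u 6 - u 1 := by
  rw [id5]; abel

lemma rid6 : u 6 = u 1 - u 2 := by
  rw [id6]; abel

lemma opp14 : u 4 = - u 1 := by
  rw [show (4:ℕ) = 1 + 3 from rfl, uneg]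

lemma opp25 : u 5 = - u 2 := by
  rw [show (5:ℕ) = 2 + 3 from rfl, uneg]

lemma opp36 : u 6 = - u 3 := by
  rw [show (6:ℕ) = 3 + 3 from rfl, uneg]

lemma opp41 : u 1 = - u 4 := by
  rw [opp14, neg_neg]

lemma opp52 : u 2 = - u 5 := by
  rw [opp25, neg_neg]

lemma opp63 : u 3 = - u 6 := by
  rw [opp36, neg_neg]

lemma une12 : u 1 ≠ u 2 := by
  have hs : (0:ℝ) < Real.sqrt 3 := Real.sqrt_pos.mpr (by norm_num)
  rw [u1v, u2v]
  intro h
  have h0 := congrArg (fun w : E => w 0) h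
  have h1 := congrArg (fun w : E => w 1) h
  simp only [PiLp.toLp_apply, Matrix.cons_val_zero, Matrix.cons_val_one, Matrix.head_cons] at h0 h1
  linarith

lemma une21 : u 2 ≠ u 1 := Ne.symm une12

lemma une13 : u 1 ≠ u 3 := by
  have hs : (0:ℝ) < Real.sqrt 3 := Real.sqrt_pos.mpr (by norm_num)
  rw [u1v, u3v]
  intro h
  have h0 := congrArg (fun w : E => w 0) h
  have h1 := congrArg (fun w : E => w 1) h
  simp only [PiLp.toLp_apply, Matrix.cons_val_zero, Matrix.cons_val_one, Matrix.head_cons] at h0 h1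
  linarith

lemma une31 : u 3 ≠ u 1 := Ne.symm une13

lemma une14 : u 1 ≠ u 4 := by
  have hs : (0:ℝ) < Real.sqrt 3 := Real.sqrt_pos.mpr (by norm_num)
  rw [u1v, u4v]
  intro h
  have h0 := congrArg (fun w : E => w 0) h
  have h1 := congrArg (fun w : E => w 1) h
  simp only [PiLp.toLp_apply, Matrix.cons_val_zero, Matrix.cons_val_one, Matrix.head_cons] at h0 h1
  linarith

lemma une41 : u 4 ≠ u 1 := Ne.symm une14

lemma une15 : u 1 ≠ u 5 := by
  have hs : (0:ℝ) < Real.sqrt 3 := Real.sqrt_pos.mpr (by norm_num)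
  rw [u1v, u5v]
  intro h
  have h0 := congrArg (fun w : E => w 0) h
  have h1 := congrArg (fun w : E => w 1) h
  simp only [PiLp.toLp_apply, Matrix.cons_val_zero, Matrix.cons_val_one, Matrix.head_cons] at h0 h1
  linarith

lemma une51 : u 5 ≠ u 1 := Ne.symm une15

lemma une16 : u 1 ≠ u 6 := by
  have hs : (0:ℝ) < Real.sqrt 3 := Real.sqrt_pos.mpr (by norm_num)
  rw [u1v, u6v]
  intro h
  have h0 := congrArg (fun w : E => w 0) h
  have h1 := congrArg (fun w : E => w 1) h
  simp only [PiLp.toLp_apply, Matrix.cons_val_zero, Matrix.cons_val_one, Matrix.head_cons] at h0 h1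
  linarith

lemma une61 : u 6 ≠ u 1 := Ne.symm une16

lemma une23 : u 2 ≠ u 3 := by
  have hs : (0:ℝ) < Real.sqrt 3 := Real.sqrt_pos.mpr (by norm_num)
  rw [u2v, u3v]
  intro h
  have h0 := congrArg (fun w : E => w 0) h
  have h1 := congrArg (fun w : E => w 1) h
  simp only [PiLp.toLp_apply, Matrix.cons_val_zero, Matrix.cons_val_one, Matrix.head_cons] at h0 h1
  linarith

lemma une32 : u 3 ≠ u 2 := Ne.symm une23

lemma une24 : u 2 ≠ u 4 := by
  have hs : (0:ℝ) < Real.sqrt 3 := Real.sqrt_pos.mpr (by norm_num)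
  rw [u2v, u4v]
  intro h
  have h0 := congrArg (fun w : E => w 0) h
  have h1 := congrArg (fun w : E => w 1) h
  simp only [PiLp.toLp_apply, Matrix.cons_val_zero, Matrix.cons_val_one, Matrix.head_cons] at h0 h1
  linarith

lemma une42 : u 4 ≠ u 2 := Ne.symm une24

lemma une25 : u 2 ≠ u 5 := by
  have hs : (0:ℝ) < Real.sqrt 3 := Real.sqrt_pos.mpr (by norm_num)
  rw [u2v, u5v]
  intro h
  have h0 := congrArg (fun w : E => w 0) h
  have h1 := congrArg (fun w : E => w 1) h
  simp only [PiLp.toLp_apply, Matrix.cons_val_zero, Matrix.cons_val_one, Matrix.head_cons] at h0 h1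
  linarith

lemma une52 : u 5 ≠ u 2 := Ne.symm une25

lemma une26 : u 2 ≠ u 6 := by
  have hs : (0:ℝ) < Real.sqrt 3 := Real.sqrt_pos.mpr (by norm_num)
  rw [u2v, u6v]
  intro h
  have h0 := congrArg (fun w : E => w 0) h
  have h1 := congrArg (fun w : E => w 1) h
  simp only [PiLp.toLp_apply, Matrix.cons_val_zero, Matrix.cons_val_one, Matrix.head_cons] at h0 h1
  linarith

lemma une62 : u 6 ≠ u 2 := Ne.symm une26

lemma une34 : u 3 ≠ u 4 := by
  have hs : (0:ℝ) < Real.sqrt 3 := Real.sqrt_pos.mpr (by norm_num)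
  rw [u3v, u4v]
  intro h
  have h0 := congrArg (fun w : E => w 0) h
  have h1 := congrArg (fun w : E => w 1) h
  simp only [PiLp.toLp_apply, Matrix.cons_val_zero, Matrix.cons_val_one, Matrix.head_cons] at h0 h1
  linarith

lemma une43 : u 4 ≠ u 3 := Ne.symm une34

lemma une35 : u 3 ≠ u 5 := by
  have hs : (0:ℝ) < Real.sqrt 3 := Real.sqrt_pos.mpr (by norm_num)
  rw [u3v, u5v]
  intro h
  have h0 := congrArg (fun w : E => w 0) h
  have h1 := congrArg (fun w : E => w 1) h
  simp only [PiLp.toLp_apply, Matrix.cons_val_zero, Matrix.cons_val_one, Matrix.head_cons] at h0 h1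
  linarith

lemma une53 : u 5 ≠ u 3 := Ne.symm une35

lemma une36 : u 3 ≠ u 6 := by
  have hs : (0:ℝ) < Real.sqrt 3 := Real.sqrt_pos.mpr (by norm_num)
  rw [u3v, u6v]
  intro h
  have h0 := congrArg (fun w : E => w 0) h
  have h1 := congrArg (fun w : E => w 1) h
  simp only [PiLp.toLp_apply, Matrix.cons_val_zero, Matrix.cons_val_one, Matrix.head_cons] at h0 h1
  linarith

lemma une63 : u 6 ≠ u 3 := Ne.symm une36

lemma une45 : u 4 ≠ u 5 := by
  have hs : (0:ℝ) < Real.sqrt 3 := Real.sqrt_pos.mpr (by norm_num)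
  rw [u4v, u5v]
  intro h
  have h0 := congrArg (fun w : E => w 0) h
  have h1 := congrArg (fun w : E => w 1) h
  simp only [PiLp.toLp_apply, Matrix.cons_val_zero, Matrix.cons_val_one, Matrix.head_cons] at h0 h1
  linarith

lemma une54 : u 5 ≠ u 4 := Ne.symm une45

lemma une46 : u 4 ≠ u 6 := by
  have hs : (0:ℝ) < Real.sqrt 3 := Real.sqrt_pos.mpr (by norm_num)
  rw [u4v, u6v]
  intro h
  have h0 := congrArg (fun w : E => w 0) h
  have h1 := congrArg (fun w : E => w 1) h
  simp only [PiLp.toLp_apply, Matrix.cons_val_zero, Matrix.cons_val_one, Matrix.head_cons] at h0 h1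
  linarith

lemma une64 : u 6 ≠ u 4 := Ne.symm une46

lemma une56 : u 5 ≠ u 6 := by
  have hs : (0:ℝ) < Real.sqrt 3 := Real.sqrt_pos.mpr (by norm_num)
  rw [u5v, u6v]
  intro h
  have h0 := congrArg (fun w : E => w 0) h
  have h1 := congrArg (fun w : E => w 1) h
  simp only [PiLp.toLp_apply, Matrix.cons_val_zero, Matrix.cons_val_one, Matrix.head_cons] at h0 h1
  linarith

lemma une65 : u 6 ≠ u 5 := Ne.symm une56


lemma norm_smul_u (k : ℕ) (c : ℝ) : ‖c • u k‖ = |c| := by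
  rw [norm_smul, u_norm, mul_one, Real.norm_eq_abs]

lemma smul_u_cancel {k : ℕ} {c d : ℝ} (h : c • u k = d • u k) : c = d := by
  by_contra hcd
  have : (c - d) • u k = 0 := by rw [sub_smul, h, sub_self]
  rcases smul_eq_zero.mp this with h' | h'
  · exact hcd (by linarith [sub_eq_zero.mp (by linarith [h'] : c - d = 0)])
  · exact u_ne_zero k h'

lemma smul_u_ne {j k : ℕ} (hjk : u j ≠ u k) {c d : ℝ} (hc : 0 < c) (hd : 0 < d) :
    c • u j ≠ d • u k := by
  intro h
  have hn : c = d := by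
    have := congrArg norm h
    rw [norm_smul_u, norm_smul_u, abs_of_pos hc, abs_of_pos hd] at this
    exact this
  rw [hn] at h
  exact hjk (smul_right_injective _ (ne_of_gt hd) h)

lemma mem_odd (a m : ℕ) (ha : a = 1 ∨ a = 3 ∨ a = 5) (hm : m % 3 = 1) :
    (1/(m:ℝ)) • u a ∈ Hset := by
  left
  refine ⟨a, by simpa using ha, m/3 + 1, by omega, ?_⟩
  have h1 : m = 3 * (m/3 + 1) - 2 := by omega
  have h2 : (3 : ℝ) * ((m/3 + 1 : ℕ) : ℝ) - 2 = (m : ℝ) := by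
    have h3 : (m : ℝ) = ((3 * (m/3 + 1) - 2 : ℕ) : ℝ) := by rw [← h1]
    have h4 : ((3 * (m/3 + 1) - 2 : ℕ) : ℝ) = 3 * ((m/3 + 1 : ℕ) : ℝ) - 2 := by
      have : 2 ≤ 3 * (m/3 + 1) := by omega
      push_cast [Nat.cast_sub this]
      ring
    rw [h3, h4]
  rw [h2]

lemma mem_even (a m : ℕ) (ha : a = 2 ∨ a = 4 ∨ a = 6) (hm : m % 3 = 2) :
    (1/(m:ℝ)) • u a ∈ Hset := by
  right
  refine ⟨a, by simpa using ha, m/3 + 1, by omega, ?_⟩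
  have h1 : m = 3 * (m/3 + 1) - 1 := by omega
  have h2 : (3 : ℝ) * ((m/3 + 1 : ℕ) : ℝ) - 1 = (m : ℝ) := by
    have h3 : (m : ℝ) = ((3 * (m/3 + 1) - 1 : ℕ) : ℝ) := by rw [← h1]
    have h4 : ((3 * (m/3 + 1) - 1 : ℕ) : ℝ) = 3 * ((m/3 + 1 : ℕ) : ℝ) - 1 := by
      have : 1 ≤ 3 * (m/3 + 1) := by omega
      push_cast [Nat.cast_sub this]
      ring
    rw [h3, h4]
  rw [h2]

lemma exists_rep {x : EuclideanSpace ℝ (Fin 2)} (hx : x ∈ Hset) :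
    ∃ a m : ℕ, (((a = 1 ∨ a = 3 ∨ a = 5) ∧ m % 3 = 1) ∨ ((a = 2 ∨ a = 4 ∨ a = 6) ∧ m % 3 = 2)) ∧
      x = (1/(m:ℝ)) • u a := by
  rcases hx with ⟨k, hk, j, hj, rfl⟩ | ⟨k, hk, j, hj, rfl⟩
  · refine ⟨k, 3*j - 2, Or.inl ⟨by simpa using hk, by omega⟩, ?_⟩
    have h4 : ((3 * j - 2 : ℕ) : ℝ) = 3 * (j : ℝ) - 2 := by
      have : 2 ≤ 3 * j := by omega
      push_cast [Nat.cast_sub this]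
      ring
    rw [h4]
  · refine ⟨k, 3*j - 1, Or.inr ⟨by simpa using hk, by omega⟩, ?_⟩
    have h4 : ((3 * j - 1 : ℕ) : ℝ) = 3 * (j : ℝ) - 1 := by
      have : 1 ≤ 3 * j := by omega
      push_cast [Nat.cast_sub this]
      ring
    rw [h4]

lemma combo_mem (L : AffineSubspace ℝ (EuclideanSpace ℝ (Fin 2)))
    {p q : EuclideanSpace ℝ (Fin 2)} (hp : p ∈ L) (hq : q ∈ L) (c : ℝ) :
    c • (q - p) + p ∈ L := by
  have := AffineSubspace.smul_vsub_vadd_mem L c hq hp hp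
  simpa using this

lemma case_adj (L : AffineSubspace ℝ (EuclideanSpace ℝ (Fin 2))) (a b c m n : ℕ)
    (hm : 1 ≤ m) (hmn : m < n)
    (hc : u c = u b - u a) (hca : u c ≠ u a) (hcb : u c ≠ u b)
    (hpL : (1/(m:ℝ)) • u a ∈ L) (hqL : (1/(n:ℝ)) • u b ∈ L)
    (hmem : (1/((n - m : ℕ):ℝ)) • u c ∈ Hset) :
    ∃ r, r ∈ Hset ∧ r ∈ L ∧ r ≠ (1/(m:ℝ)) • u a ∧ r ≠ (1/(n:ℝ)) • u b := by
  have hm0 : (0:ℝ) < m := by exact_mod_cast hm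
  have hn0 : (0:ℝ) < n := by
    have : 0 < n := by omega
    exact_mod_cast this
  have hmn' : (m:ℝ) < n := by exact_mod_cast hmn
  have hcast : ((n - m : ℕ):ℝ) = (n:ℝ) - m := by
    push_cast [Nat.cast_sub hmn.le]
    ring
  have hnm0 : (0:ℝ) < (n:ℝ) - m := by linarith
  refine ⟨_, hmem, ?_, ?_, ?_⟩
  · rw [hcast, hc]
    have key : (1/((n:ℝ)-m)) • (u b - u a)
        = ((n:ℝ)/((n:ℝ)-m)) • ((1/(n:ℝ)) • u b - (1/(m:ℝ)) • u a) + (1/(m:ℝ)) • u a := by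
      have h1 : (m:ℝ) ≠ 0 := ne_of_gt hm0
      have h2 : (n:ℝ) ≠ 0 := ne_of_gt hn0
      have h3 : (n:ℝ) - m ≠ 0 := ne_of_gt hnm0
      match_scalars <;> field_simp <;> ring
    rw [key]
    exact combo_mem L hpL hqL _
  · exact smul_u_ne hca (by rw [hcast]; positivity) (by positivity)
  · exact smul_u_ne hcb (by rw [hcast]; positivity) (by positivity)

lemma case_sum (L : AffineSubspace ℝ (EuclideanSpace ℝ (Fin 2))) (a b c m n : ℕ)
    (hm : 1 ≤ m) (hn : 1 ≤ n)
    (hc : u c = u a + u b) (hca : u c ≠ u a) (hcb : u c ≠ u b)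
    (hpL : (1/(m:ℝ)) • u a ∈ L) (hqL : (1/(n:ℝ)) • u b ∈ L)
    (hmem : (1/((m + n : ℕ):ℝ)) • u c ∈ Hset) :
    ∃ r, r ∈ Hset ∧ r ∈ L ∧ r ≠ (1/(m:ℝ)) • u a ∧ r ≠ (1/(n:ℝ)) • u b := by
  have hm0 : (0:ℝ) < m := by exact_mod_cast hm
  have hn0 : (0:ℝ) < n := by exact_mod_cast hn
  have hcast : ((m + n : ℕ):ℝ) = (m:ℝ) + n := by push_cast; ring
  refine ⟨_, hmem, ?_, ?_, ?_⟩
  · rw [hcast, hc]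
    have key : (1/((m:ℝ)+n)) • (u a + u b)
        = ((n:ℝ)/((m:ℝ)+n)) • ((1/(n:ℝ)) • u b - (1/(m:ℝ)) • u a) + (1/(m:ℝ)) • u a := by
      have h1 : (m:ℝ) ≠ 0 := ne_of_gt hm0
      have h2 : (n:ℝ) ≠ 0 := ne_of_gt hn0
      have h3 : (m:ℝ) + n ≠ 0 := by positivity
      match_scalars <;> field_simp <;> ring
    rw [key]
    exact combo_mem L hpL hqL _
  · exact smul_u_ne hca (by rw [hcast]; positivity) (by positivity)
  · exact smul_u_ne hcb (by rw [hcast]; positivity) (by positivity)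

lemma case_same (L : AffineSubspace ℝ (EuclideanSpace ℝ (Fin 2))) (a m n m' : ℕ)
    (hm : 1 ≤ m) (hn : 1 ≤ n) (hm' : 1 ≤ m') (h1 : m' ≠ m) (h2 : m' ≠ n)
    (hpL : (1/(m:ℝ)) • u a ∈ L) (hqL : (1/(n:ℝ)) • u a ∈ L)
    (hne : (1/(m:ℝ)) • u a ≠ (1/(n:ℝ)) • u a)
    (hmem : (1/(m':ℝ)) • u a ∈ Hset) :
    ∃ r, r ∈ Hset ∧ r ∈ L ∧ r ≠ (1/(m:ℝ)) • u a ∧ r ≠ (1/(n:ℝ)) • u a := by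
  have hm0 : (0:ℝ) < m := by exact_mod_cast hm
  have hn0 : (0:ℝ) < n := by exact_mod_cast hn
  have hm'0 : (0:ℝ) < m' := by exact_mod_cast hm'
  have hss : (1/(m:ℝ)) ≠ (1/(n:ℝ)) := fun hss => hne (by rw [hss])
  refine ⟨_, hmem, ?_, ?_, ?_⟩
  · have key : (1/(m':ℝ)) • u a
        = ((1/(m':ℝ) - 1/m)/(1/(n:ℝ) - 1/m)) • ((1/(n:ℝ)) • u a - (1/(m:ℝ)) • u a)
          + (1/(m:ℝ)) • u a := by
      have hne2 : (m:ℝ) ≠ n := fun h => hss (by rw [h])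
      have h3 : (n:ℝ) - m ≠ 0 := sub_ne_zero.mpr (fun h => hne2 (by linarith))
      have h4 : (m:ℝ) - n ≠ 0 := sub_ne_zero.mpr hne2
      have h5 : (m:ℝ) ≠ 0 := ne_of_gt hm0
      have h6 : (n:ℝ) ≠ 0 := ne_of_gt hn0
      have h7 : (m':ℝ) ≠ 0 := ne_of_gt hm'0
      match_scalars
      field_simp
      ring
    rw [key]
    exact combo_mem L hpL hqL _
  · intro h
    have := smul_u_cancel h
    have hmm : (m':ℝ) = m := by
      rw [div_eq_div_iff (by positivity) (by positivity)] at this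
      linarith
    exact h1 (by exact_mod_cast hmm)
  · intro h
    have := smul_u_cancel h
    have hmm : (m':ℝ) = n := by
      rw [div_eq_div_iff (by positivity) (by positivity)] at this
      linarith
    exact h2 (by exact_mod_cast hmm)

lemma case_opp (L : AffineSubspace ℝ (EuclideanSpace ℝ (Fin 2))) (a b m n : ℕ)
    (hm : 1 ≤ m) (hn : 1 ≤ n) (hb : u b = - u a)
    (hpL : (1/(m:ℝ)) • u a ∈ L) (hqL : (1/(n:ℝ)) • u b ∈ L)
    (hmem : (1/((m + 3 : ℕ):ℝ)) • u a ∈ Hset) :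
    ∃ r, r ∈ Hset ∧ r ∈ L ∧ r ≠ (1/(m:ℝ)) • u a ∧ r ≠ (1/(n:ℝ)) • u b := by
  have hm0 : (0:ℝ) < m := by exact_mod_cast hm
  have hn0 : (0:ℝ) < n := by exact_mod_cast hn
  have hcast : ((m + 3 : ℕ):ℝ) = (m:ℝ) + 3 := by push_cast; ring
  have hqL' : (-(1/(n:ℝ))) • u a ∈ L := by
    have : (-(1/(n:ℝ))) • u a = (1/(n:ℝ)) • u b := by rw [hb, smul_neg, neg_smul]
    rw [this]; exact hqL
  refine ⟨_, hmem, ?_, ?_, ?_⟩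
  · rw [hcast]
    have key : (1/((m:ℝ)+3)) • u a
        = ((1/((m:ℝ)+3) - 1/m)/(-(1/(n:ℝ)) - 1/m)) • ((-(1/(n:ℝ))) • u a - (1/(m:ℝ)) • u a)
          + (1/(m:ℝ)) • u a := by
      have h3 : (-(1/(n:ℝ))) - 1/m ≠ 0 := by
        have : (0:ℝ) < 1/n := by positivity
        have : (0:ℝ) < 1/m := by positivity
        intro hcon
        nlinarith
      have h4 : -(m:ℝ) - n ≠ 0 := by nlinarith
      have h5 : (m:ℝ) ≠ 0 := ne_of_gt hm0
      have h6 : (n:ℝ) ≠ 0 := ne_of_gt hn0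
      have h7 : (m:ℝ) + 3 ≠ 0 := by nlinarith
      match_scalars
      field_simp
      ring
    rw [key]
    exact combo_mem L hpL hqL' _
  · intro h
    have := smul_u_cancel h
    have : (m:ℝ) + 3 = m := by
      rw [div_eq_div_iff (by positivity) (by positivity)] at this
      linarith
    linarith
  · intro h
    rw [hb, smul_neg, ← neg_smul] at h
    have := smul_u_cancel h
    have hpos : (0:ℝ) < 1/((m:ℝ)+3) := by positivity
    have hneg : -(1/(n:ℝ)) < 0 := by
      have : (0:ℝ) < 1/n := by positivity
      linarith
    rw [hcast] at this
    linarith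

lemma sid1 : u 2 = u 1 + u 3 := by
  have h := usum 1
  rw [show (1+2 : ℕ) = 3 from rfl, show (1+1 : ℕ) = 2 from rfl] at h
  exact h.symm

lemma sid2 : u 3 = u 2 + u 4 := by
  have h := usum 2
  rw [show (2+2 : ℕ) = 4 from rfl, show (2+1 : ℕ) = 3 from rfl] at h
  exact h.symm

lemma sid3 : u 4 = u 3 + u 5 := by
  have h := usum 3
  rw [show (3+2 : ℕ) = 5 from rfl, show (3+1 : ℕ) = 4 from rfl] at h
  exact h.symm

lemma sid4 : u 5 = u 4 + u 6 := by
  have h := usum 4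
  rw [show (4+2 : ℕ) = 6 from rfl, show (4+1 : ℕ) = 5 from rfl] at h
  exact h.symm

lemma sid5 : u 6 = u 5 + u 1 := by
  have h := usum 5
  rw [show (5+2 : ℕ) = 7 from rfl, show (5+1 : ℕ) = 6 from rfl] at h
  rw [show (7:ℕ) = 1 + 6 from rfl, uper 1] at h
  exact h.symm

lemma sid6 : u 1 = u 6 + u 2 := by
  have h := usum 6
  rw [show (6+2 : ℕ) = 8 from rfl, show (6+1 : ℕ) = 7 from rfl] at h
  rw [show (8:ℕ) = 2 + 6 from rfl, uper 2] at h
  rw [show (7:ℕ) = 1 + 6 from rfl, uper 1] at h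
  exact h.symm

lemma sid21 : u 2 = u 3 + u 1 := by
  rw [sid1]; abel

lemma sid22 : u 3 = u 4 + u 2 := by
  rw [sid2]; abel

lemma sid23 : u 4 = u 5 + u 3 := by
  rw [sid3]; abel

lemma sid24 : u 5 = u 6 + u 4 := by
  rw [sid4]; abel

lemma sid25 : u 6 = u 1 + u 5 := by
  rw [sid5]; abel

lemma sid26 : u 1 = u 2 + u 6 := by
  rw [sid6]; abel

lemma third_point (L : AffineSubspace ℝ (EuclideanSpace ℝ (Fin 2)))
    {p q : EuclideanSpace ℝ (Fin 2)}
    (hp : p ∈ Hset) (hq : q ∈ Hset) (hpL : p ∈ L) (hqL : q ∈ L) (hne : p ≠ q) :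
    ∃ r, r ∈ Hset ∧ r ∈ L ∧ r ≠ p ∧ r ≠ q := by
  obtain ⟨a, m, hva, rfl⟩ := exists_rep hp
  obtain ⟨b, n, hvb, rfl⟩ := exists_rep hq
  rcases hva with ⟨ha, hm⟩ | ⟨ha, hm⟩
  all_goals rcases hvb with ⟨hb, hn⟩ | ⟨hb, hn⟩
  all_goals rcases ha with rfl | rfl | rfl
  all_goals rcases hb with rfl | rfl | rfl
  · by_cases h6 : m + 6 = n
    · exact case_same L 1 m n (m+3) (by omega) (by omega) (by omega) (by omega) (by omega) hpL hqL hne (mem_odd 1 (m+3) (by omega) (by omega))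
    · exact case_same L 1 m n (m+6) (by omega) (by omega) (by omega) (by omega) (by omega) hpL hqL hne (mem_odd 1 (m+6) (by omega) (by omega))
  · exact case_sum L 1 3 2 m n (by omega) (by omega) sid1 une21 une23 hpL hqL (mem_even 2 (m+n) (by omega) (by omega))
  · exact case_sum L 1 5 6 m n (by omega) (by omega) sid25 une61 une65 hpL hqL (mem_even 6 (m+n) (by omega) (by omega))
  · exact case_sum L 3 1 2 m n (by omega) (by omega) sid21 une23 une21 hpL hqL (mem_even 2 (m+n) (by omega) (by omega))
  · by_cases h6 : m + 6 = n
    · exact case_same L 3 m n (m+3) (by omega) (by omega) (by omega) (by omega) (by omega) hpL hqL hne (mem_odd 3 (m+3) (by omega) (by omega))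
    · exact case_same L 3 m n (m+6) (by omega) (by omega) (by omega) (by omega) (by omega) hpL hqL hne (mem_odd 3 (m+6) (by omega) (by omega))
  · exact case_sum L 3 5 4 m n (by omega) (by omega) sid3 une43 une45 hpL hqL (mem_even 4 (m+n) (by omega) (by omega))
  · exact case_sum L 5 1 6 m n (by omega) (by omega) sid5 une65 une61 hpL hqL (mem_even 6 (m+n) (by omega) (by omega))
  · exact case_sum L 5 3 4 m n (by omega) (by omega) sid23 une45 une43 hpL hqL (mem_even 4 (m+n) (by omega) (by omega))
  · by_cases h6 : m + 6 = n
    · exact case_same L 5 m n (m+3) (by omega) (by omega) (by omega) (by omega) (by omega) hpL hqL hne (mem_odd 5 (m+3) (by omega) (by omega))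
    · exact case_same L 5 m n (m+6) (by omega) (by omega) (by omega) (by omega) (by omega) hpL hqL hne (mem_odd 5 (m+6) (by omega) (by omega))
  · rcases Nat.lt_trichotomy m n with hlt | heq | hlt
    · exact case_adj L 1 2 3 m n (by omega) hlt id1 une31 une32 hpL hqL (mem_odd 3 (n-m) (by omega) (by omega))
    · exact absurd heq (by omega)
    · obtain ⟨r, h1, h2, h3, h4⟩ := case_adj L 2 1 6 n m (by omega) hlt rid6 une62 une61 hqL hpL (mem_even 6 (m-n) (by omega) (by omega))
      exact ⟨r, h1, h2, h4, h3⟩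
  · exact case_opp L 1 4 m n (by omega) (by omega) opp14 hpL hqL (mem_odd 1 (m+3) (by omega) (by omega))
  · rcases Nat.lt_trichotomy m n with hlt | heq | hlt
    · exact case_adj L 1 6 5 m n (by omega) hlt rid5 une51 une56 hpL hqL (mem_odd 5 (n-m) (by omega) (by omega))
    · exact absurd heq (by omega)
    · obtain ⟨r, h1, h2, h3, h4⟩ := case_adj L 6 1 2 n m (by omega) hlt id6 une26 une21 hqL hpL (mem_even 2 (m-n) (by omega) (by omega))
      exact ⟨r, h1, h2, h4, h3⟩
  · rcases Nat.lt_trichotomy m n with hlt | heq | hlt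
    · exact case_adj L 3 2 1 m n (by omega) hlt rid1 une13 une12 hpL hqL (mem_odd 1 (n-m) (by omega) (by omega))
    · exact absurd heq (by omega)
    · obtain ⟨r, h1, h2, h3, h4⟩ := case_adj L 2 3 4 n m (by omega) hlt id2 une42 une43 hqL hpL (mem_even 4 (m-n) (by omega) (by omega))
      exact ⟨r, h1, h2, h4, h3⟩
  · rcases Nat.lt_trichotomy m n with hlt | heq | hlt
    · exact case_adj L 3 4 5 m n (by omega) hlt id3 une53 une54 hpL hqL (mem_odd 5 (n-m) (by omega) (by omega))
    · exact absurd heq (by omega)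
    · obtain ⟨r, h1, h2, h3, h4⟩ := case_adj L 4 3 2 n m (by omega) hlt rid2 une24 une23 hqL hpL (mem_even 2 (m-n) (by omega) (by omega))
      exact ⟨r, h1, h2, h4, h3⟩
  · exact case_opp L 3 6 m n (by omega) (by omega) opp36 hpL hqL (mem_odd 3 (m+3) (by omega) (by omega))
  · exact case_opp L 5 2 m n (by omega) (by omega) opp52 hpL hqL (mem_odd 5 (m+3) (by omega) (by omega))
  · rcases Nat.lt_trichotomy m n with hlt | heq | hlt
    · exact case_adj L 5 4 3 m n (by omega) hlt rid3 une35 une34 hpL hqL (mem_odd 3 (n-m) (by omega) (by omega))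
    · exact absurd heq (by omega)
    · obtain ⟨r, h1, h2, h3, h4⟩ := case_adj L 4 5 6 n m (by omega) hlt id4 une64 une65 hqL hpL (mem_even 6 (m-n) (by omega) (by omega))
      exact ⟨r, h1, h2, h4, h3⟩
  · rcases Nat.lt_trichotomy m n with hlt | heq | hlt
    · exact case_adj L 5 6 1 m n (by omega) hlt id5 une15 une16 hpL hqL (mem_odd 1 (n-m) (by omega) (by omega))
    · exact absurd heq (by omega)
    · obtain ⟨r, h1, h2, h3, h4⟩ := case_adj L 6 5 4 n m (by omega) hlt rid4 une46 une45 hqL hpL (mem_even 4 (m-n) (by omega) (by omega))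
      exact ⟨r, h1, h2, h4, h3⟩
  · rcases Nat.lt_trichotomy m n with hlt | heq | hlt
    · exact case_adj L 2 1 6 m n (by omega) hlt rid6 une62 une61 hpL hqL (mem_even 6 (n-m) (by omega) (by omega))
    · exact absurd heq (by omega)
    · obtain ⟨r, h1, h2, h3, h4⟩ := case_adj L 1 2 3 n m (by omega) hlt id1 une31 une32 hqL hpL (mem_odd 3 (m-n) (by omega) (by omega))
      exact ⟨r, h1, h2, h4, h3⟩
  · rcases Nat.lt_trichotomy m n with hlt | heq | hlt
    · exact case_adj L 2 3 4 m n (by omega) hlt id2 une42 une43 hpL hqL (mem_even 4 (n-m) (by omega) (by omega))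
    · exact absurd heq (by omega)
    · obtain ⟨r, h1, h2, h3, h4⟩ := case_adj L 3 2 1 n m (by omega) hlt rid1 une13 une12 hqL hpL (mem_odd 1 (m-n) (by omega) (by omega))
      exact ⟨r, h1, h2, h4, h3⟩
  · exact case_opp L 2 5 m n (by omega) (by omega) opp25 hpL hqL (mem_even 2 (m+3) (by omega) (by omega))
  · exact case_opp L 4 1 m n (by omega) (by omega) opp41 hpL hqL (mem_even 4 (m+3) (by omega) (by omega))
  · rcases Nat.lt_trichotomy m n with hlt | heq | hlt
    · exact case_adj L 4 3 2 m n (by omega) hlt rid2 une24 une23 hpL hqL (mem_even 2 (n-m) (by omega) (by omega))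
    · exact absurd heq (by omega)
    · obtain ⟨r, h1, h2, h3, h4⟩ := case_adj L 3 4 5 n m (by omega) hlt id3 une53 une54 hqL hpL (mem_odd 5 (m-n) (by omega) (by omega))
      exact ⟨r, h1, h2, h4, h3⟩
  · rcases Nat.lt_trichotomy m n with hlt | heq | hlt
    · exact case_adj L 4 5 6 m n (by omega) hlt id4 une64 une65 hpL hqL (mem_even 6 (n-m) (by omega) (by omega))
    · exact absurd heq (by omega)
    · obtain ⟨r, h1, h2, h3, h4⟩ := case_adj L 5 4 3 n m (by omega) hlt rid3 une35 une34 hqL hpL (mem_odd 3 (m-n) (by omega) (by omega))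
      exact ⟨r, h1, h2, h4, h3⟩
  · rcases Nat.lt_trichotomy m n with hlt | heq | hlt
    · exact case_adj L 6 1 2 m n (by omega) hlt id6 une26 une21 hpL hqL (mem_even 2 (n-m) (by omega) (by omega))
    · exact absurd heq (by omega)
    · obtain ⟨r, h1, h2, h3, h4⟩ := case_adj L 1 6 5 n m (by omega) hlt rid5 une51 une56 hqL hpL (mem_odd 5 (m-n) (by omega) (by omega))
      exact ⟨r, h1, h2, h4, h3⟩
  · exact case_opp L 6 3 m n (by omega) (by omega) opp63 hpL hqL (mem_even 6 (m+3) (by omega) (by omega))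
  · rcases Nat.lt_trichotomy m n with hlt | heq | hlt
    · exact case_adj L 6 5 4 m n (by omega) hlt rid4 une46 une45 hpL hqL (mem_even 4 (n-m) (by omega) (by omega))
    · exact absurd heq (by omega)
    · obtain ⟨r, h1, h2, h3, h4⟩ := case_adj L 5 6 1 n m (by omega) hlt id5 une15 une16 hqL hpL (mem_odd 1 (m-n) (by omega) (by omega))
      exact ⟨r, h1, h2, h4, h3⟩
  · by_cases h6 : m + 6 = n
    · exact case_same L 2 m n (m+3) (by omega) (by omega) (by omega) (by omega) (by omega) hpL hqL hne (mem_even 2 (m+3) (by omega) (by omega))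
    · exact case_same L 2 m n (m+6) (by omega) (by omega) (by omega) (by omega) (by omega) hpL hqL hne (mem_even 2 (m+6) (by omega) (by omega))
  · exact case_sum L 2 4 3 m n (by omega) (by omega) sid2 une32 une34 hpL hqL (mem_odd 3 (m+n) (by omega) (by omega))
  · exact case_sum L 2 6 1 m n (by omega) (by omega) sid26 une12 une16 hpL hqL (mem_odd 1 (m+n) (by omega) (by omega))
  · exact case_sum L 4 2 3 m n (by omega) (by omega) sid22 une34 une32 hpL hqL (mem_odd 3 (m+n) (by omega) (by omega))
  · by_cases h6 : m + 6 = n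
    · exact case_same L 4 m n (m+3) (by omega) (by omega) (by omega) (by omega) (by omega) hpL hqL hne (mem_even 4 (m+3) (by omega) (by omega))
    · exact case_same L 4 m n (m+6) (by omega) (by omega) (by omega) (by omega) (by omega) hpL hqL hne (mem_even 4 (m+6) (by omega) (by omega))
  · exact case_sum L 4 6 5 m n (by omega) (by omega) sid4 une54 une56 hpL hqL (mem_odd 5 (m+n) (by omega) (by omega))
  · exact case_sum L 6 2 1 m n (by omega) (by omega) sid6 une16 une12 hpL hqL (mem_odd 1 (m+n) (by omega) (by omega))
  · exact case_sum L 6 4 5 m n (by omega) (by omega) sid24 une56 une54 hpL hqL (mem_odd 5 (m+n) (by omega) (by omega))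
  · by_cases h6 : m + 6 = n
    · exact case_same L 6 m n (m+3) (by omega) (by omega) (by omega) (by omega) (by omega) hpL hqL hne (mem_even 6 (m+3) (by omega) (by omega))
    · exact case_same L 6 m n (m+6) (by omega) (by omega) (by omega) (by omega) (by omega) hpL hqL hne (mem_even 6 (m+6) (by omega) (by omega))


lemma hset_countable : Hset.Countable := by
  have hsub : Hset ⊆
      Set.range (fun p : ℕ × ℕ => (1 / (3 * (p.2 : ℝ) - 2)) • u p.1) ∪
      Set.range (fun p : ℕ × ℕ => (1 / (3 * (p.2 : ℝ) - 1)) • u p.1) := by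
    rintro x (⟨k, hk, j, hj, rfl⟩ | ⟨k, hk, j, hj, rfl⟩)
    · exact Or.inl ⟨(k, j), rfl⟩
    · exact Or.inr ⟨(k, j), rfl⟩
  exact Set.Countable.mono hsub ((Set.countable_range _).union (Set.countable_range _))

lemma hset_infinite : Hset.Infinite := by
  apply Set.infinite_of_injective_forall_mem
    (f := fun i : ℕ => (1 / (3 * ((i + 1 : ℕ) : ℝ) - 2)) • u 1)
  · intro i j hij
    simp only at hij
    have hi : (0:ℝ) < 3 * ((i + 1 : ℕ) : ℝ) - 2 := by push_cast; linarith [Nat.cast_nonneg (α := ℝ) i]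
    have hj : (0:ℝ) < 3 * ((j + 1 : ℕ) : ℝ) - 2 := by push_cast; linarith [Nat.cast_nonneg (α := ℝ) j]
    have h := smul_u_cancel hij
    rw [one_div, one_div, inv_inj] at h
    have : (i : ℝ) = j := by push_cast at h; linarith
    exact_mod_cast this
  · intro i
    exact Or.inl ⟨1, by simp, i + 1, by omega, rfl⟩

lemma hset_bounded : Bornology.IsBounded Hset := by
  apply Bornology.IsBounded.subset (Metric.isBounded_closedBall (x := (0 : EuclideanSpace ℝ (Fin 2))) (r := 1))
  intro x hx
  obtain ⟨a, mm, hv, rfl⟩ := exists_rep hx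
  have hm1 : 1 ≤ mm := by rcases hv with ⟨_, h⟩ | ⟨_, h⟩ <;> omega
  have hm0 : (1:ℝ) ≤ (mm:ℝ) := by exact_mod_cast hm1
  rw [Metric.mem_closedBall, dist_zero_right, norm_smul_u]
  rw [abs_of_pos (by positivity)]
  rw [div_le_one (by linarith)]
  linarith

lemma hset_not_collinear : ¬ Collinear ℝ Hset := by
  intro hcol
  have hs : (0:ℝ) < Real.sqrt 3 := Real.sqrt_pos.mpr (by norm_num)
  have hmem1 : u 1 ∈ Hset := by
    have := mem_odd 1 1 (by omega) (by omega)
    simpa using this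
  have hmem2 : (1/(4:ℝ)) • u 1 ∈ Hset := by
    have := mem_odd 1 4 (by omega) (by omega)
    simpa using this
  have hmem3 : (1/(2:ℝ)) • u 2 ∈ Hset := by
    have := mem_even 2 2 (by omega) (by omega)
    simpa using this
  rw [collinear_iff_of_mem hmem1] at hcol
  obtain ⟨v, hv⟩ := hcol
  obtain ⟨r1, e1⟩ := hv _ hmem2
  obtain ⟨r2, e2⟩ := hv _ hmem3
  rw [vadd_eq_add] at e1 e2
  have e10 := congrArg (fun w : E => w 0) e1
  have e11 := congrArg (fun w : E => w 1) e1
  have e20 := congrArg (fun w : E => w 1) e2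
  rw [u1v] at e10 e11
  rw [u2v] at e20
  simp only [PiLp.add_apply, PiLp.smul_apply, smul_eq_mul, PiLp.toLp_apply, Matrix.cons_val_zero,
    Matrix.cons_val_one, Matrix.head_cons, u1v] at e10 e11 e20
  -- e10 : (1/4) * 1 = r1 * v 0 + 1 ; e11 : (1/4) * 0 = r1 * v 1 + 0 ; e20 : (1/2) * (√3/2) = r2 * v 1 + 0
  have hr1 : r1 ≠ 0 := by
    intro h
    rw [h] at e10
    norm_num at e10
  have hv1 : v 1 = 0 := by
    have : r1 * v 1 = 0 := by linarith
    rcases mul_eq_zero.mp this with h | h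
    · exact absurd h hr1
    · exact h
  rw [hv1] at e20
  nlinarith

lemma hset_acc_zero : AccPt (0 : EuclideanSpace ℝ (Fin 2)) (𝓟 Hset) := by
  rw [accPt_iff_nhds]
  intro U hU
  obtain ⟨ε, hε, hball⟩ := Metric.mem_nhds_iff.mp hU
  obtain ⟨N, hN⟩ := exists_nat_gt (1/ε)
  have hN0 : (0:ℝ) < 3 * ((N:ℝ) + 1) - 2 := by
    have : (0:ℝ) ≤ N := Nat.cast_nonneg N
    linarith
  refine ⟨(1 / (((3 * (N+1) - 2 : ℕ)) : ℝ)) • u 1, ⟨?_, ?_⟩, ?_⟩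
  · apply hball
    rw [Metric.mem_ball, dist_zero_right, norm_smul_u]
    have hcast : (((3 * (N+1) - 2 : ℕ)) : ℝ) = 3 * ((N:ℝ) + 1) - 2 := by
      have : 2 ≤ 3 * (N+1) := by omega
      push_cast [Nat.cast_sub this]
      ring
    rw [hcast, abs_of_pos (by positivity)]
    have h1 : (1:ℝ)/ε < N := hN
    have hε' : 0 < (N:ℝ) := lt_trans (by positivity) h1
    rw [div_lt_iff₀ hN0]
    rw [div_lt_iff₀ hε] at hN
    nlinarith [Nat.cast_nonneg (α := ℝ) N]
  · exact mem_odd 1 (3 * (N+1) - 2) (by omega) (by omega)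
  · apply smul_ne_zero
    · have hcast : (((3 * (N+1) - 2 : ℕ)) : ℝ) = 3 * ((N:ℝ) + 1) - 2 := by
        have : 2 ≤ 3 * (N+1) := by omega
        push_cast [Nat.cast_sub this]
        ring
      rw [hcast]
      positivity
    · exact u_ne_zero 1

lemma hset_finite_far (r : ℝ) (hr : 0 < r) : (Hset ∩ {y | r ≤ ‖y‖}).Finite := by
  obtain ⟨M, hM⟩ := exists_nat_gt (1/r)
  apply Set.Finite.subset (((Set.finite_Iic M).prod (Set.finite_Iic 6)).image
    (fun p : ℕ × ℕ => (1/(p.1 : ℝ)) • u p.2))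
  rintro x ⟨hx, hnorm⟩
  obtain ⟨a, mm, hv, rfl⟩ := exists_rep hx
  have hm1 : 1 ≤ mm := by rcases hv with ⟨_, h⟩ | ⟨_, h⟩ <;> omega
  have ha6 : a ≤ 6 := by rcases hv with ⟨h, _⟩ | ⟨h, _⟩ <;> omega
  have hm0 : (0:ℝ) < mm := by exact_mod_cast hm1
  have hnx : ‖(1/(mm:ℝ)) • u a‖ = 1/mm := by
    rw [norm_smul_u, abs_of_pos (by positivity)]
  rw [Set.mem_setOf_eq, hnx] at hnorm
  have hmle : (mm:ℝ) ≤ 1/r := by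
    rw [le_div_iff₀ hr]
    rw [le_div_iff₀ hm0] at hnorm
    linarith
  have hmM : mm ≤ M := by
    have : (mm:ℝ) < M := lt_of_le_of_lt hmle hM
    exact_mod_cast this.le
  exact ⟨(mm, a), ⟨hmM, ha6⟩, rfl⟩

lemma hset_unique_acc (x : EuclideanSpace ℝ (Fin 2)) (hx : AccPt x (𝓟 Hset)) : x = 0 := by
  by_contra hx0
  have hxn : 0 < ‖x‖ := norm_pos_iff.mpr hx0
  set r := ‖x‖/2 with hrdef
  have hr : 0 < r := by positivity
  have hF : (Hset ∩ {y | r ≤ ‖y‖}).Finite := hset_finite_far r hr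
  set F := Hset ∩ {y | r ≤ ‖y‖} with hFdef
  have hclosed : IsClosed (F \ {x}) := ((hF.diff).isClosed)
  have hUopen : IsOpen (Metric.ball x r \ (F \ {x})) := Metric.isOpen_ball.sdiff hclosed
  have hxU : x ∈ Metric.ball x r \ (F \ {x}) := by
    constructor
    · exact Metric.mem_ball_self hr
    · simp
  obtain ⟨y, ⟨hyU, hyH⟩, hyx⟩ := accPt_iff_nhds.mp hx ((Metric.ball x r \ (F \ {x}))) (hUopen.mem_nhds hxU)
  have hyb : y ∈ Metric.ball x r := hyU.1
  have hyF : y ∈ F := by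
    refine ⟨hyH, ?_⟩
    rw [Set.mem_setOf_eq]
    rw [Metric.mem_ball] at hyb
    have h1 : ‖x‖ - ‖y‖ ≤ dist y x := by
      rw [dist_comm, dist_eq_norm]
      calc ‖x‖ - ‖y‖ ≤ ‖x - y‖ := norm_sub_norm_le x y
      _ = ‖x - y‖ := rfl
    linarith
  exact hyU.2 ⟨hyF, hyx⟩


theorem Hset_properties :
    Hset.Countable ∧ Hset.Infinite ∧ Bornology.IsBounded Hset ∧ ¬ Collinear ℝ Hset ∧
    AccPt (0 : EuclideanSpace ℝ (Fin 2)) (𝓟 Hset) ∧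
    (∀ x : EuclideanSpace ℝ (Fin 2), AccPt x (𝓟 Hset) → x = 0) ∧
    ∀ L : AffineSubspace ℝ (EuclideanSpace ℝ (Fin 2)), IsLine L →
      ¬ ∃ p q, p ≠ q ∧ (L : Set (EuclideanSpace ℝ (Fin 2))) ∩ Hset = {p, q} := by
  refine ⟨hset_countable, hset_infinite, hset_bounded, hset_not_collinear, hset_acc_zero,
    hset_unique_acc, ?_⟩
  rintro L - ⟨p, q, hpq, hint⟩
  have hp : p ∈ (L : Set (EuclideanSpace ℝ (Fin 2))) ∩ Hset := by
    rw [hint]; exact Or.inl rfl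
  have hq : q ∈ (L : Set (EuclideanSpace ℝ (Fin 2))) ∩ Hset := by
    rw [hint]; exact Or.inr rfl
  obtain ⟨r, hrH, hrL, hrp, hrq⟩ := third_point L hp.2 hq.2 hp.1 hq.1 hpq
  have : r ∈ ({p, q} : Set (EuclideanSpace ℝ (Fin 2))) := by
    rw [← hint]; exact ⟨hrL, hrH⟩
  rcases this with h | h
  · exact hrp h
  · exact hrq h
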